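/- Let b > 0, ε > 0, let f(u) = u for all u ∈ ℝ, and let x₀ : [−b,b] → ℝ be twice continuously differentiable with x₀(u) = −x₀(−u) for all u ∈ [−b,b], x₀'(u) > 0 for all u, and x₀''(u) ≤ u for all u ∈ (0,b). Let x be a classical solution of the ε-regularized problem on [−b,b] (with a = −b) such that x(u,t) = −x(−u,t) for all (u,t), and such that in addition x_t is continuous on [−b,b]×[0,∞) and has continuous partial derivatives ∂_u x_t, ∂_uu x_t and ∂_t x_t on (−b,b)×(0,∞). Then for every u ∈ [0,b) the function t ↦ x(u,t) is nonincreasing on [0,∞). -/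

import Mathlib

open Set MeasureTheory intervalIntegral Filter

/-- A classical solution of the `ε`-regularized problem \eqref{xepseq}:
`x` is continuous on `[a,b] × [0,∞)` together with its partial derivatives
`x_u`, `x_uu` (within `[a,b]` in space) and `x_t` (within `[0,∞)` in time),
satisfies `x_t = (x_uu - f(u))/(x_u² + ε)` on `(a,b) × (0,∞)`, the boundary
conditions `x(a,t) = -1`, `x(b,t) = 1`, and `x(·,0) = x₀`. -/
def IsClassicalSolEps (a b ε : ℝ) (f x₀ : ℝ → ℝ) (x xu xuu xt : ℝ → ℝ → ℝ) : Prop :=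
  ContinuousOn (fun p : ℝ × ℝ => x p.1 p.2) (Set.Icc a b ×ˢ Set.Ici 0) ∧
  ContinuousOn (fun p : ℝ × ℝ => xu p.1 p.2) (Set.Icc a b ×ˢ Set.Ici 0) ∧
  ContinuousOn (fun p : ℝ × ℝ => xuu p.1 p.2) (Set.Icc a b ×ˢ Set.Ici 0) ∧
  ContinuousOn (fun p : ℝ × ℝ => xt p.1 p.2) (Set.Icc a b ×ˢ Set.Ici 0) ∧
  (∀ t : ℝ, 0 ≤ t → ∀ u ∈ Set.Icc a b,
      HasDerivWithinAt (fun v => x v t) (xu u t) (Set.Icc a b) u) ∧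
  (∀ t : ℝ, 0 ≤ t → ∀ u ∈ Set.Icc a b,
      HasDerivWithinAt (fun v => xu v t) (xuu u t) (Set.Icc a b) u) ∧
  (∀ u ∈ Set.Icc a b, ∀ t : ℝ, 0 ≤ t →
      HasDerivWithinAt (fun s => x u s) (xt u t) (Set.Ici 0) t) ∧
  (∀ u ∈ Set.Ioo a b, ∀ t : ℝ, 0 < t →
      xt u t = (xuu u t - f u) / ((xu u t) ^ 2 + ε)) ∧
  (∀ t : ℝ, 0 ≤ t → x a t = -1 ∧ x b t = 1) ∧
  (∀ u ∈ Set.Icc a b, x u 0 = x₀ u)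


lemma aux_time_deriv (a b : ℝ) (G Gt Gu Gtu : ℝ → ℝ → ℝ)
    (hGt : ∀ v ∈ Set.Ioo a b, ∀ s : ℝ, 0 < s → HasDerivAt (fun s => G v s) (Gt v s) s)
    (hGu : ∀ s : ℝ, 0 < s → ∀ v ∈ Set.Ioo a b, HasDerivAt (fun v => G v s) (Gu v s) v)
    (hGtu : ∀ s : ℝ, 0 < s → ∀ v ∈ Set.Ioo a b, HasDerivAt (fun v => Gt v s) (Gtu v s) v)
    (hcGt : ContinuousOn (fun p : ℝ × ℝ => Gt p.1 p.2) (Set.Ioo a b ×ˢ Set.Ioi 0))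
    (hcGtu : ContinuousOn (fun p : ℝ × ℝ => Gtu p.1 p.2) (Set.Ioo a b ×ˢ Set.Ioi 0)) :
    ∀ u ∈ Set.Ioo a b, ∀ t : ℝ, 0 < t → HasDerivAt (fun s => Gu u s) (Gtu u t) t := by
  intro u hu t ht
  -- choose a closed ball around u inside (a,b)
  obtain ⟨δ, hδpos, hδ⟩ : ∃ δ > 0, Metric.closedBall u δ ⊆ Set.Ioo a b := by
    rcases Metric.mem_nhds_iff.1 (isOpen_Ioo.mem_nhds hu) with ⟨r, hr, hsub⟩
    exact ⟨r / 2, by linarith, (Metric.closedBall_subset_ball (by linarith)).trans hsub⟩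
  have hball : ∀ v ∈ Metric.closedBall u δ, v ∈ Set.Ioo a b := fun v hv => hδ hv
  have huball : u ∈ Metric.closedBall u δ := Metric.mem_closedBall_self hδpos.le
  -- bound for Gtu on compact set
  have hKc : IsCompact (Metric.closedBall u δ ×ˢ Set.Icc (t / 2) (2 * t)) :=
    (isCompact_closedBall u δ).prod isCompact_Icc
  have hKsub : Metric.closedBall u δ ×ˢ Set.Icc (t / 2) (2 * t) ⊆ Set.Ioo a b ×ˢ Set.Ioi 0 := by
    rintro ⟨v, s⟩ ⟨hv, hs⟩
    exact ⟨hδ hv, lt_of_lt_of_le (by linarith) hs.1⟩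
  obtain ⟨M, hM⟩ := hKc.exists_bound_of_continuousOn (hcGtu.mono hKsub)
  -- continuity of slices
  have hslice : ∀ v ∈ Set.Ioo a b, ContinuousOn (fun s => Gt v s) (Set.Ioi 0) := by
    intro v hv s hs
    exact (hcGt (v, s) ⟨hv, hs⟩).comp
      ((continuous_const.prodMk continuous_id).continuousWithinAt) (fun r hr => ⟨hv, hr⟩)
  have hsliceu : ContinuousOn (fun s => Gtu u s) (Set.Ioi 0) := by
    intro s hs
    exact (hcGtu (u, s) ⟨hu, hs⟩).comp
      ((continuous_const.prodMk continuous_id).continuousWithinAt) (fun r hr => ⟨hu, hr⟩)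
  -- key representation
  have key : ∀ s ∈ Set.Ioo (t / 2) (2 * t),
      Gu u s - Gu u (t / 2) = ∫ r in (t / 2)..s, Gtu u r := by
    intro s hs
    have hts : t / 2 ≤ s := hs.1.le
    have huIcc : Set.uIcc (t / 2) s ⊆ Set.Icc (t / 2) (2 * t) := by
      rw [Set.uIcc_of_le hts]
      exact Set.Icc_subset_Icc le_rfl hs.2.le
    have hpos' : ∀ r ∈ Set.uIcc (t / 2) s, (0 : ℝ) < r := fun r hr =>
      lt_of_lt_of_le (by linarith) (huIcc hr).1
    -- the integral function in v
    have hint : ∀ v ∈ Metric.closedBall u δ,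
        IntervalIntegrable (fun r => Gt v r) volume (t / 2) s := by
      intro v hv
      exact ((hslice v (hδ hv)).mono (fun r hr => hpos' r hr)).intervalIntegrable
    have hrep : ∀ v ∈ Metric.closedBall u δ,
        (∫ r in (t / 2)..s, Gt v r) = G v s - G v (t / 2) := by
      intro v hv
      exact integral_eq_sub_of_hasDerivAt
        (fun r hr => hGt v (hδ hv) r (hpos' r hr)) (hint v hv)
    have hmeas : MeasurableSet (Set.uIoc (t / 2) s) := measurableSet_uIoc
    have hIoc_sub : Set.uIoc (t / 2) s ⊆ Set.uIcc (t / 2) s := Set.uIoc_subset_uIcc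
    have hI : HasDerivAt (fun v => ∫ r in (t / 2)..s, Gt v r)
        (∫ r in (t / 2)..s, Gtu u r) u := by
      refine (intervalIntegral.hasDerivAt_integral_of_dominated_loc_of_deriv_le (Metric.ball_mem_nhds u hδpos)
        (F := fun v r => Gt v r) (F' := fun v r => Gtu v r) (bound := fun _ => M)
        ?_ (hint u huball) ?_ ?_ ?_ ?_).2
      · filter_upwards [Metric.ball_mem_nhds u hδpos] with v hv
        exact (((hslice v (hδ (Metric.ball_subset_closedBall hv))).mono
          (fun r hr => hpos' r (hIoc_sub hr))).aestronglyMeasurable hmeas)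
      · exact ((hsliceu.mono (fun r hr => hpos' r (hIoc_sub hr))).aestronglyMeasurable hmeas)
      · refine Filter.Eventually.of_forall (fun r => ?_)
        intro hr v hv
        exact hM (v, r) ⟨Metric.ball_subset_closedBall hv, huIcc (hIoc_sub hr)⟩
      · exact intervalIntegrable_const
      · refine Filter.Eventually.of_forall (fun r => ?_)
        intro hr v hv
        exact hGtu r (hpos' r (hIoc_sub hr)) v (hδ (Metric.ball_subset_closedBall hv))
    have hH : HasDerivAt (fun v => G v s - G v (t / 2)) (Gu u s - Gu u (t / 2)) u :=
      (hGu s (lt_of_lt_of_le (by linarith) hts) u hu).sub (hGu (t / 2) (by linarith) u hu)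
    have heq : (fun v => ∫ r in (t / 2)..s, Gt v r) =ᶠ[nhds u]
        (fun v => G v s - G v (t / 2)) := by
      filter_upwards [Metric.closedBall_mem_nhds u hδpos] with v hv
      exact hrep v hv
    have hI' : HasDerivAt (fun v => G v s - G v (t / 2))
        (∫ r in (t / 2)..s, Gtu u r) u := hI.congr_of_eventuallyEq heq.symm
    exact (hH.unique hI')
  -- FTC on the integral of Gtu
  have hψ : HasDerivAt (fun s => ∫ r in (t / 2)..s, Gtu u r) (Gtu u t) t := by
    refine intervalIntegral.integral_hasDerivAt_right ?_ ?_ ?_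
    · refine ((hsliceu.mono ?_).intervalIntegrable)
      rw [Set.uIcc_of_le (by linarith : t / 2 ≤ t)]
      exact fun r hr => lt_of_lt_of_le (by linarith) hr.1
    · exact ContinuousOn.stronglyMeasurableAtFilter isOpen_Ioi hsliceu t ht
    · exact hsliceu.continuousAt (Ioi_mem_nhds ht)
  have heq2 : (fun s => Gu u (t / 2) + ∫ r in (t / 2)..s, Gtu u r) =ᶠ[nhds t]
      (fun s => Gu u s) := by
    filter_upwards [Ioo_mem_nhds (by linarith : t / 2 < t) (by linarith : t < 2 * t)] with s hs
    have := key s hs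
    linarith
  simpa using ((hψ.const_add (Gu u (t / 2))).congr_of_eventuallyEq heq2.symm)

/-- Lemma 5.2: in the symmetric setting (`f(u) = u`, odd data with
`x₀'' ≤ u` on `(0,b)`), an odd classical solution of the `ε`-regularized
problem on `[-b,b]` (whose time derivative is smooth enough) is nonincreasing
in time at every `u ∈ [0,b)`. -/
theorem lem_decreasing (b : ℝ) (hb : 0 < b) (ε : ℝ) (hε : 0 < ε)
    (x₀ x₀' x₀'' : ℝ → ℝ)
    (hx₀d1 : ∀ u ∈ Set.Icc (-b) b, HasDerivWithinAt x₀ (x₀' u) (Set.Icc (-b) b) u)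
    (hx₀d2 : ∀ u ∈ Set.Icc (-b) b, HasDerivWithinAt x₀' (x₀'' u) (Set.Icc (-b) b) u)
    (hx₀c : ContinuousOn x₀'' (Set.Icc (-b) b))
    (hodd₀ : ∀ u ∈ Set.Icc (-b) b, x₀ u = -x₀ (-u))
    (hpos₀ : ∀ u ∈ Set.Icc (-b) b, 0 < x₀' u)
    (hconc₀ : ∀ u ∈ Set.Ioo 0 b, x₀'' u ≤ u)
    (x xu xuu xt : ℝ → ℝ → ℝ)
    (hsol : IsClassicalSolEps (-b) b ε (fun u => u) x₀ x xu xuu xt)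
    (hodd : ∀ u ∈ Set.Icc (-b) b, ∀ t : ℝ, 0 ≤ t → x u t = -x (-u) t)
    (xtu xtuu xtt : ℝ → ℝ → ℝ)
    (hxtu : ∀ t : ℝ, 0 < t → ∀ u ∈ Set.Ioo (-b) b,
      HasDerivAt (fun v => xt v t) (xtu u t) u)
    (hxtuu : ∀ t : ℝ, 0 < t → ∀ u ∈ Set.Ioo (-b) b,
      HasDerivAt (fun v => xtu v t) (xtuu u t) u)
    (hxtt : ∀ u ∈ Set.Ioo (-b) b, ∀ t : ℝ, 0 < t →
      HasDerivAt (fun s => xt u s) (xtt u t) t)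
    (hcxtu : ContinuousOn (fun p : ℝ × ℝ => xtu p.1 p.2) (Set.Ioo (-b) b ×ˢ Set.Ioi 0))
    (hcxtuu : ContinuousOn (fun p : ℝ × ℝ => xtuu p.1 p.2) (Set.Ioo (-b) b ×ˢ Set.Ioi 0))
    (hcxtt : ContinuousOn (fun p : ℝ × ℝ => xtt p.1 p.2) (Set.Ioo (-b) b ×ˢ Set.Ioi 0)) :
    ∀ u ∈ Set.Ico 0 b, AntitoneOn (fun t => x u t) (Set.Ici 0) := by
  obtain ⟨hcx, hcxu, hcxuu, hcxt, hdxu, hdxuu, hdxt, hpde0, hbc, hinit⟩ := hsol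
  have hpde : ∀ u ∈ Set.Ioo (-b) b, ∀ t : ℝ, 0 < t →
      xt u t = (xuu u t - u) / ((xu u t) ^ 2 + ε) := hpde0
  have hbb : -b < b := by linarith
  -- interior pointwise derivatives in space
  have hx_uAt : ∀ s : ℝ, 0 ≤ s → ∀ v ∈ Set.Ioo (-b) b, HasDerivAt (fun w => x w s) (xu v s) v :=
    fun s hs v hv => (hdxu s hs v (Ioo_subset_Icc_self hv)).hasDerivAt
      (Icc_mem_nhds hv.1 hv.2)
  have hxu_uAt : ∀ s : ℝ, 0 ≤ s → ∀ v ∈ Set.Ioo (-b) b,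
      HasDerivAt (fun w => xu w s) (xuu v s) v :=
    fun s hs v hv => (hdxuu s hs v (Ioo_subset_Icc_self hv)).hasDerivAt
      (Icc_mem_nhds hv.1 hv.2)
  have hx_tAt : ∀ v ∈ Set.Icc (-b) b, ∀ s : ℝ, 0 < s →
      HasDerivAt (fun s => x v s) (xt v s) s :=
    fun v hv s hs => (hdxt v hv s hs.le).hasDerivAt (Ici_mem_nhds hs)
  have hprodsub : Set.Ioo (-b) b ×ˢ Set.Ioi (0:ℝ) ⊆ Set.Icc (-b) b ×ˢ Set.Ici 0 :=
    Set.prod_mono Ioo_subset_Icc_self Ioi_subset_Ici_self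
  -- time differentiability of xu and xuu
  have hxu_t : ∀ u ∈ Set.Ioo (-b) b, ∀ t : ℝ, 0 < t →
      HasDerivAt (fun s => xu u s) (xtu u t) t :=
    aux_time_deriv (-b) b x xt xu xtu
      (fun v hv s hs => hx_tAt v (Ioo_subset_Icc_self hv) s hs)
      (fun s hs v hv => hx_uAt s hs.le v hv)
      (fun s hs v hv => hxtu s hs v hv)
      (hcxt.mono hprodsub) hcxtu
  have hxuu_t : ∀ u ∈ Set.Ioo (-b) b, ∀ t : ℝ, 0 < t →
      HasDerivAt (fun s => xuu u s) (xtuu u t) t :=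
    aux_time_deriv (-b) b xu xtu xuu xtuu hxu_t
      (fun s hs v hv => hxu_uAt s hs.le v hv)
      (fun s hs v hv => hxtuu s hs v hv)
      hcxtu hcxtuu
  -- time-differentiated PDE
  have hpde_t : ∀ v ∈ Set.Ioo (-b) b, ∀ t : ℝ, 0 < t →
      xtt v t * ((xu v t) ^ 2 + ε) + xt v t * (2 * xu v t * xtu v t) = xtuu v t := by
    intro v hv t ht
    have hev : (fun s => xt v s * ((xu v s) ^ 2 + ε)) =ᶠ[nhds t]
        (fun s => xuu v s - v) := by
      filter_upwards [Ioi_mem_nhds ht] with s hs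
      have h := hpde v hv s hs
      have hden : ((xu v s) ^ 2 + ε) ≠ 0 := by positivity
      rw [h]; field_simp
    have h1 : HasDerivAt (fun s => (xu v s) ^ 2 + ε) (2 * xu v t * xtu v t) t := by
      have h := ((hxu_t v hv t ht).fun_pow 2).add_const ε
      exact h.congr_deriv (by norm_num)
    have hL : HasDerivAt (fun s => xt v s * ((xu v s) ^ 2 + ε))
        (xtt v t * ((xu v t) ^ 2 + ε) + xt v t * (2 * xu v t * xtu v t)) t :=
      (hxtt v hv t ht).mul h1
    have hR : HasDerivAt (fun s => xuu v s - v) (xtuu v t) t :=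
      (hxuu_t v hv t ht).sub_const v
    have hR' : HasDerivAt (fun s => xt v s * ((xu v s) ^ 2 + ε)) (xtuu v t) t :=
      hR.congr_of_eventuallyEq hev
    exact hL.unique hR'
  -- identification of xu, xuu at time 0
  have hxu0 : ∀ v ∈ Set.Icc (-b) b, xu v 0 = x₀' v := by
    intro v hv
    have h1 : HasDerivWithinAt x₀ (xu v 0) (Set.Icc (-b) b) v :=
      (hdxu 0 le_rfl v hv).congr (fun w hw => (hinit w hw).symm) (hinit v hv).symm
    exact (h1.derivWithin (uniqueDiffOn_Icc hbb v hv)).symm.trans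
      ((hx₀d1 v hv).derivWithin (uniqueDiffOn_Icc hbb v hv))
  have hxuu0 : ∀ v ∈ Set.Icc (-b) b, xuu v 0 = x₀'' v := by
    intro v hv
    have h1 : HasDerivWithinAt x₀' (xuu v 0) (Set.Icc (-b) b) v :=
      (hdxuu 0 le_rfl v hv).congr (fun w hw => (hxu0 w hw).symm) (hxu0 v hv).symm
    exact (h1.derivWithin (uniqueDiffOn_Icc hbb v hv)).symm.trans
      ((hx₀d2 v hv).derivWithin (uniqueDiffOn_Icc hbb v hv))
  -- boundary values of xt
  have h0mem : (0:ℝ) ∈ Set.Icc (-b) b := ⟨by linarith, hb.le⟩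
  have hbmem : b ∈ Set.Icc (-b) b := ⟨by linarith, le_rfl⟩
  have hx0t : ∀ t : ℝ, 0 ≤ t → x 0 t = 0 := by
    intro t ht
    have := hodd 0 h0mem t ht
    rw [neg_zero] at this
    linarith
  have hxt0 : ∀ t : ℝ, 0 ≤ t → xt 0 t = 0 := by
    intro t ht
    have h1 : HasDerivWithinAt (fun s => x 0 s) (xt 0 t) (Set.Ici 0) t :=
      hdxt 0 h0mem t ht
    have h2 : HasDerivWithinAt (fun s => x 0 s) 0 (Set.Ici 0) t :=
      (hasDerivWithinAt_const t _ (0:ℝ)).congr (fun s hs => (hx0t s hs))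
        (hx0t t ht)
    exact (h1.derivWithin (uniqueDiffOn_Ici 0 t ht)).symm.trans
      (h2.derivWithin (uniqueDiffOn_Ici 0 t ht))
  have hxtb : ∀ t : ℝ, 0 ≤ t → xt b t = 0 := by
    intro t ht
    have h1 : HasDerivWithinAt (fun s => x b s) (xt b t) (Set.Ici 0) t :=
      hdxt b hbmem t ht
    have h2 : HasDerivWithinAt (fun s => x b s) 0 (Set.Ici 0) t :=
      (hasDerivWithinAt_const t _ (1:ℝ)).congr (fun s hs => ((hbc s hs).2))
        ((hbc t ht).2)
    exact (h1.derivWithin (uniqueDiffOn_Ici 0 t ht)).symm.trans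
      (h2.derivWithin (uniqueDiffOn_Ici 0 t ht))
  -- nonpositivity at t = 0
  have hinit_np : ∀ v ∈ Set.Icc 0 b, xt v 0 ≤ 0 := by
    intro v hv
    rcases eq_or_lt_of_le hv.1 with h0 | h0
    · rw [← h0, hxt0 0 le_rfl]
    rcases eq_or_lt_of_le hv.2 with hb' | hb'
    · rw [hb', hxtb 0 le_rfl]
    have hvI : v ∈ Set.Ioo (-b) b := ⟨by linarith, hb'⟩
    have hvIcc : v ∈ Set.Icc (-b) b := Ioo_subset_Icc_self hvI
    have hsl : ∀ (g : ℝ → ℝ → ℝ),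
        ContinuousOn (fun p : ℝ × ℝ => g p.1 p.2) (Set.Icc (-b) b ×ˢ Set.Ici 0) →
        Tendsto (fun s => g v s) (nhdsWithin 0 (Set.Ioi 0)) (nhds (g v 0)) := by
      intro g hg
      have h1 : ContinuousWithinAt (fun s => g v s) (Set.Ici 0) 0 :=
        (hg (v, 0) ⟨hvIcc, le_refl (0:ℝ)⟩).comp
          ((continuous_const.prodMk continuous_id).continuousWithinAt)
          (fun s hs => ⟨hvIcc, hs⟩)
      exact h1.tendsto.mono_left (nhdsWithin_mono _ Ioi_subset_Ici_self)
    have hc1 := hsl xt hcxt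
    have hden : ((xu v 0) ^ 2 + ε) ≠ 0 := by positivity
    have hc2 : Tendsto (fun s => (xuu v s - v) / ((xu v s) ^ 2 + ε))
        (nhdsWithin 0 (Set.Ioi 0)) (nhds ((xuu v 0 - v) / ((xu v 0) ^ 2 + ε))) :=
      ((hsl xuu hcxuu).sub_const v).div (((hsl xu hcxu).pow 2).add_const ε) hden
    have hc2' : Tendsto (fun s => xt v s) (nhdsWithin 0 (Set.Ioi 0))
        (nhds ((xuu v 0 - v) / ((xu v 0) ^ 2 + ε))) := by
      refine hc2.congr' ?_
      filter_upwards [self_mem_nhdsWithin] with s hs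
      exact (hpde v hvI s hs).symm
    have heq : xt v 0 = (xuu v 0 - v) / ((xu v 0) ^ 2 + ε) :=
      tendsto_nhds_unique hc1 hc2'
    rw [heq, hxuu0 v hvIcc, hxu0 v hvIcc]
    apply div_nonpos_of_nonpos_of_nonneg
    · have := hconc₀ v ⟨h0, hb'⟩; linarith
    · positivity
  -- the maximum principle
  have hmainT : ∀ δ : ℝ, 0 < δ → ∀ T : ℝ, 0 < T →
      ∀ p ∈ Set.Icc (0:ℝ) b ×ˢ Set.Icc (0:ℝ) T, xt p.1 p.2 - δ * p.2 ≤ 0 := by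
    intro δ hδ T hT
    set F : ℝ × ℝ → ℝ := fun p => xt p.1 p.2 - δ * p.2 with hFdef
    have hKsub : Set.Icc (0:ℝ) b ×ˢ Set.Icc (0:ℝ) T ⊆ Set.Icc (-b) b ×ˢ Set.Ici 0 :=
      Set.prod_mono (Icc_subset_Icc (by linarith) le_rfl) Icc_subset_Ici_self
    have hcF : ContinuousOn F (Set.Icc (0:ℝ) b ×ˢ Set.Icc (0:ℝ) T) :=
      (hcxt.mono hKsub).sub (continuous_const.mul continuous_snd).continuousOn
    have hne : (Set.Icc (0:ℝ) b ×ˢ Set.Icc (0:ℝ) T).Nonempty :=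
      ⟨(0, 0), ⟨⟨le_rfl, hb.le⟩, ⟨le_rfl, hT.le⟩⟩⟩
    obtain ⟨p, hpK, hmax⟩ := (isCompact_Icc.prod isCompact_Icc).exists_isMaxOn hne hcF
    suffices hF0 : F p ≤ 0 by
      intro q hq; exact le_trans (hmax hq) hF0
    by_contra hFp
    push_neg at hFp
    obtain ⟨⟨hu0, hub⟩, ht0, htT⟩ := hpK
    have hmax' : ∀ q ∈ Set.Icc (0:ℝ) b ×ˢ Set.Icc (0:ℝ) T, F q ≤ F p := fun q hq => hmax hq
    -- p.2 > 0
    have hp2 : 0 < p.2 := by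
      rcases eq_or_lt_of_le ht0 with h | h
      · exfalso
        have h2 := hinit_np p.1 ⟨hu0, hub⟩
        simp only [hFdef] at hFp
        rw [← h] at hFp
        simp only [mul_zero, sub_zero] at hFp
        linarith
      · exact h
    have hp1a : 0 < p.1 := by
      rcases eq_or_lt_of_le hu0 with h | h
      · exfalso
        have h2 := hxt0 p.2 ht0
        simp only [hFdef] at hFp
        rw [← h] at hFp
        rw [h2] at hFp
        nlinarith
      · exact h
    have hp1b : p.1 < b := by
      rcases eq_or_lt_of_le hub with h | h
      · exfalso
        have h2 := hxtb p.2 ht0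
        simp only [hFdef] at hFp
        rw [h] at hFp
        rw [h2] at hFp
        nlinarith
      · exact h
    have hpI : p.1 ∈ Set.Ioo (-b) b := ⟨by linarith, hp1b⟩
    -- local max in space
    have hloc : IsLocalMax (fun v => xt v p.2) p.1 := by
      filter_upwards [Ioo_mem_nhds hp1a hp1b] with v hv
      have h1 := hmax' (v, p.2) ⟨⟨hv.1.le, hv.2.le⟩, ⟨ht0, htT⟩⟩
      simp only [hFdef] at h1
      simpa using h1
    have hxtu0 : xtu p.1 p.2 = 0 := by
      have h1 := (hxtu p.2 hp2 p.1 hpI).deriv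
      rw [← h1]
      exact hloc.deriv_eq_zero
    -- second derivative nonpositive
    have hxtuu_np : xtuu p.1 p.2 ≤ 0 := by
      by_contra hpos
      push_neg at hpos
      have hcA : ContinuousAt (fun v => xtuu v p.2) p.1 :=
        (hcxtuu.continuousAt ((isOpen_Ioo.prod isOpen_Ioi).mem_nhds
          ⟨hpI, hp2⟩)).comp ((continuous_id.prodMk continuous_const).continuousAt)
      have hev1 : ∀ᶠ v in nhds p.1, 0 < xtuu v p.2 := hcA.eventually (eventually_gt_nhds hpos)
      have hev2 : ∀ᶠ v in nhds p.1, v ∈ Set.Ioo (-b) b :=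
        eventually_of_mem (isOpen_Ioo.mem_nhds hpI) (fun v hv => hv)
      obtain ⟨r, hr, hprop⟩ := Metric.eventually_nhds_iff.1 ((hev1.and hev2).and hloc)
      have hmem : ∀ w ∈ Set.Icc p.1 (p.1 + r / 2),
          (0 < xtuu w p.2 ∧ w ∈ Set.Ioo (-b) b) ∧ xt w p.2 ≤ xt p.1 p.2 := by
        intro w hw
        apply hprop
        rw [Real.dist_eq, abs_lt]
        constructor <;> [linarith [hw.1]; linarith [hw.2]]
      have hmono1 : StrictMonoOn (fun v => xtu v p.2) (Set.Icc p.1 (p.1 + r / 2)) := by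
        apply strictMonoOn_of_deriv_pos (convex_Icc _ _)
        · exact fun w hw =>
            ((hxtuu p.2 hp2 w (hmem w hw).1.2).continuousAt).continuousWithinAt
        · intro w hw
          rw [interior_Icc] at hw
          have hwIcc : w ∈ Set.Icc p.1 (p.1 + r / 2) := ⟨hw.1.le, hw.2.le⟩
          rw [(hxtuu p.2 hp2 w (hmem w hwIcc).1.2).deriv]
          exact (hmem w hwIcc).1.1
      have h0lt : ∀ w ∈ Set.Ioc p.1 (p.1 + r / 2), 0 < xtu w p.2 := by
        intro w hw
        have h : xtu p.1 p.2 < xtu w p.2 :=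
          hmono1 ⟨le_rfl, by linarith⟩ ⟨hw.1.le, hw.2⟩ hw.1
        rw [hxtu0] at h
        exact h
      have hmono2 : StrictMonoOn (fun v => xt v p.2) (Set.Icc p.1 (p.1 + r / 2)) := by
        apply strictMonoOn_of_deriv_pos (convex_Icc _ _)
        · exact fun w hw =>
            ((hxtu p.2 hp2 w (hmem w hw).1.2).continuousAt).continuousWithinAt
        · intro w hw
          rw [interior_Icc] at hw
          have hwIcc : w ∈ Set.Icc p.1 (p.1 + r / 2) := ⟨hw.1.le, hw.2.le⟩
          rw [(hxtu p.2 hp2 w (hmem w hwIcc).1.2).deriv]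
          exact h0lt w ⟨hw.1, hw.2.le⟩
      have hlt : xt p.1 p.2 < xt (p.1 + r / 2) p.2 :=
        hmono2 ⟨le_rfl, by linarith⟩ ⟨by linarith, le_rfl⟩ (by linarith)
      have hle : xt (p.1 + r / 2) p.2 ≤ xt p.1 p.2 :=
        (hmem (p.1 + r / 2) ⟨by linarith, le_rfl⟩).2
      linarith
    -- time derivative at the max is ≥ δ
    have hxtt_ge : δ ≤ xtt p.1 p.2 := by
      have hg : HasDerivAt (fun s => xt p.1 s - δ * s) (xtt p.1 p.2 - δ) p.2 := by
        have h1 : HasDerivAt (fun s : ℝ => δ * s) δ p.2 := by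
          simpa using (hasDerivAt_id p.2).const_mul δ
        exact (hxtt p.1 hpI p.2 hp2).sub h1
      have hmaxg : IsLocalMaxOn (fun s => xt p.1 s - δ * s) (Set.Icc 0 T) p.2 := by
        have h1 : IsMaxOn (fun s => xt p.1 s - δ * s) (Set.Icc 0 T) p.2 := by
          intro s hs
          exact hmax' (p.1, s) ⟨⟨hu0, hub⟩, hs⟩
        exact h1.filter_mono (le_principal_iff.2 self_mem_nhdsWithin)
      have hcone : -p.2 ∈ posTangentConeAt (Set.Icc 0 T) p.2 := by
        have hseg : segment ℝ p.2 (p.2 + -p.2) ⊆ Set.Icc 0 T := by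
          rw [add_neg_cancel]
          rw [segment_symm, segment_eq_Icc ht0]
          exact Icc_subset_Icc le_rfl htT
        exact mem_posTangentConeAt_of_segment_subset hseg
      have h2 := hmaxg.hasFDerivWithinAt_nonpos hg.hasDerivWithinAt hcone
      have h3 : -p.2 * (xtt p.1 p.2 - δ) ≤ 0 := by
        simpa [smul_eq_mul] using h2
      nlinarith
    -- contradiction via time-differentiated PDE
    have hpdeT := hpde_t p.1 hpI p.2 hp2
    rw [hxtu0] at hpdeT
    have hden : (0:ℝ) < (xu p.1 p.2) ^ 2 + ε := by positivity
    nlinarith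
  -- nonpositivity of xt everywhere
  have hclaim : ∀ v ∈ Set.Icc 0 b, ∀ t : ℝ, 0 ≤ t → xt v t ≤ 0 := by
    intro v hv t ht
    rcases eq_or_lt_of_le ht with h | h
    · rw [← h]; exact hinit_np v hv
    by_contra hp
    push_neg at hp
    have h1 := hmainT (xt v t / (2 * t)) (by positivity) t h (v, t) ⟨hv, ⟨h.le, le_rfl⟩⟩
    simp only at h1
    have h2 : xt v t / (2 * t) * t = xt v t / 2 := by
      field_simp
    rw [h2] at h1
    linarith
  -- conclusion
  intro u hu
  have huI : u ∈ Set.Icc (-b) b := ⟨by linarith [hu.1], hu.2.le⟩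
  apply antitoneOn_of_deriv_nonpos (convex_Ici 0)
  · intro t ht
    exact (hcx (u, t) ⟨huI, ht⟩).comp
      ((continuous_const.prodMk continuous_id).continuousWithinAt)
      (fun s hs => ⟨huI, hs⟩)
  · rw [interior_Ici]
    exact fun t ht => ((hdxt u huI t (le_of_lt ht)).hasDerivAt
      (Ici_mem_nhds ht)).differentiableAt.differentiableWithinAt
  · rw [interior_Ici]
    intro t ht
    rw [((hdxt u huI t ht.le).hasDerivAt (Ici_mem_nhds ht)).deriv]
    exact hclaim u ⟨hu.1, hu.2.le⟩ t ht.le
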